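/- arXiv:cond-mat/0602024 — 3 statements merged into one kernel-verified Lean document; each statement's English description precedes it below -/
import Mathlib

section
/- Preservation of dissipation type: Let $\dot f = J(f)$ be a kinetic equation on a convex set $U$ with smooth entropy $S$ satisfying $(D_f S(f))(J(f)) \geq 0$ for all $f$. Define the macroscopic entropy $S(M) = S(f^*_M)$ and the quasi-equilibrium dynamics $\dot M = m(J(f^*_M))$. Then along the quasi-equilibrium dynamics, $\frac{d S(M)}{dt} = (D_f S)(f^*_M)(J(f^*_M)) \geq 0$. In particular, if the microscopic system is conservative ($(D_f S)(J) \equiv 0$), so is the quasi-equilibrium approximation. -/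
/-- Preservation of the dissipation type: if the microscopic kinetics
`ḟ = J(f)` does not decrease the entropy `S`, then along the quasi-equilibrium
dynamics `Ṁ = m(J(f*_M))` the macroscopic entropy `S(M) = S(f*_M)` satisfies
`dS(M)/dt = (D_f S)(f*_M)(J(f*_M)) ≥ 0`. In particular conservative microscopic
systems give conservative quasi-equilibrium approximations. -/
theorem quasiEquilibrium_preserves_dissipation
    (E : Type*) [NormedAddCommGroup E] [NormedSpace ℝ E] [FiniteDimensional ℝ E]
    (U : Set E) (hU : IsOpen U) (hUc : Convex ℝ U)
    (S : E → ℝ) (hS : ContDiff ℝ (⊤ : ℕ∞) S)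
    (J : E → E)
    (hdiss : ∀ f ∈ U, 0 ≤ fderiv ℝ S f (J f))
    (k : ℕ) (m : E →L[ℝ] (Fin k → ℝ)) (hm : Function.Surjective m)
    (fstar : (Fin k → ℝ) → E) (hfd : Differentiable ℝ fstar)
    (hmem : ∀ M, fstar M ∈ U)
    (hsc : ∀ M, m (fstar M) = M)
    (hmax : ∀ M, ∀ f ∈ U, m f = M → S f ≤ S (fstar M))
    (M : ℝ → Fin k → ℝ)
    (hM : ∀ t : ℝ, HasDerivAt M (m (J (fstar (M t)))) t) :
    ∀ t : ℝ,
      deriv (fun s => S (fstar (M s))) t = fderiv ℝ S (fstar (M t)) (J (fstar (M t)))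
      ∧ 0 ≤ deriv (fun s => S (fstar (M s))) t := by
  intro t
  set f0 : E := fstar (M t) with hf0
  set φ : E →L[ℝ] ℝ := fderiv ℝ S f0 with hφ
  set D : (Fin k → ℝ) →L[ℝ] E := fderiv ℝ fstar (M t) with hD
  set v : Fin k → ℝ := m (J f0) with hv
  have hSdiff : Differentiable ℝ S := hS.differentiable (by simp)
  -- the Lagrange-multiplier fact: φ annihilates ker m
  have hker : ∀ w : E, m w = 0 → φ w = 0 := by
    intro w hw
    have hg0 : HasDerivAt (fun s : ℝ => S (f0 + s • w)) (φ w) 0 := by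
      have h1 : HasDerivAt (fun s : ℝ => f0 + s • w) w 0 := by
        simpa using ((hasDerivAt_id (0 : ℝ)).smul_const w).const_add f0
      have h2 : HasFDerivAt S φ ((fun s : ℝ => f0 + s • w) 0) := by
        simpa using (hSdiff f0).hasFDerivAt
      exact h2.comp_hasDerivAt 0 h1
    have hmax0 : IsLocalMax (fun s : ℝ => S (f0 + s • w)) 0 := by
      have hopen : IsOpen {s : ℝ | f0 + s • w ∈ U} :=
        hU.preimage (by continuity)
      have h0 : (0 : ℝ) ∈ {s : ℝ | f0 + s • w ∈ U} := by
        simpa using hmem (M t)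
      filter_upwards [hopen.mem_nhds h0] with s hs
      have hmeq : m (f0 + s • w) = M t := by
        simp [map_add, map_smul, hw, hf0, hsc]
      simpa using hmax (M t) _ hs hmeq
    exact hmax0.hasDerivAt_eq_zero hg0
  -- m (D v) = v
  have hmD : ∀ u : Fin k → ℝ, m (D u) = u := by
    intro u
    have h1 : HasFDerivAt (fun N => m (fstar N)) (m.comp D) (M t) :=
      m.hasFDerivAt.comp (M t) (hfd (M t)).hasFDerivAt
    have h2 : HasFDerivAt (fun N : Fin k → ℝ => N)
        (ContinuousLinearMap.id ℝ (Fin k → ℝ)) (M t) := hasFDerivAt_id _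
    have h3 : (fun N => m (fstar N)) = fun N : Fin k → ℝ => N := funext hsc
    rw [h3] at h1
    have := h1.unique h2
    calc m (D u) = (m.comp D) u := rfl
      _ = u := by rw [this]; rfl
  -- chain rule
  have hchain : HasDerivAt (fun s => S (fstar (M s))) (φ (D v)) t := by
    have h1 : HasDerivAt (fun s => fstar (M s)) (D v) t :=
      (hfd (M t)).hasFDerivAt.comp_hasDerivAt t (hM t)
    exact ((hSdiff f0).hasFDerivAt).comp_hasDerivAt t h1
  have hw : φ (D v) = φ (J f0) := by
    have hker' : φ (D v - J f0) = 0 := by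
      apply hker
      simp [map_sub, hmD, hv]
    have := φ.map_sub (D v) (J f0)
    rw [hker'] at this
    linarith [this]
  have hderiv : deriv (fun s => S (fstar (M s))) t = φ (J f0) := by
    rw [hchain.deriv, hw]
  exact ⟨hderiv, hderiv ▸ hdiss f0 (hmem (M t))⟩
end

section
/- Matching expansion for the natural projector: let $J$ be a smooth vector field on $E$, $m: E \to \mathbb{R}^k$ linear, $f^*_M$ a smooth family with $m(f^*_M) = M$. Suppose $\Psi(M, \tau) = \Psi_0(M) + \tau \Psi_1(M) + o(\tau)$ generates a flow $\Phi_\tau$ satisfying $m(\Theta_\tau(f^*_M)) = \Phi_\tau(M) + o(\tau^2)$ for all $M$, where $\Theta_\tau$ is the flow of $\dot f = J(f)$. Then $\Psi_0(M) = m(J(f^*_M))$ and $\Psi_1(M) = \tfrac12 m\big((D_f J)(f^*_M)\, \Delta_{f^*_M}\big)$, where $\Delta_{f^*_M} = J(f^*_M) - (D_M f^*_M)(m(J(f^*_M)))$ is the defect of invariance. -/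
open Asymptotics Filter

-- helper: vanishing coefficient
lemma aux_coeff_zero {F : Type*} [NormedAddCommGroup F] [NormedSpace ℝ F]
    {a : F} {n : ℕ} (hn : n ≠ 0)
    (h : (fun τ : ℝ => τ ^ n • a) =o[nhds (0 : ℝ)] fun τ => τ ^ n) : a = 0 := by
  have key : ∀ c : ℝ, 0 < c → ‖a‖ ≤ c := by
    intro c hc
    have := (isLittleO_iff.mp h) hc
    have h2 : ∀ᶠ τ : ℝ in nhdsWithin 0 {0}ᶜ, ‖τ ^ n • a‖ ≤ c * ‖τ ^ n‖ :=
      nhdsWithin_le_nhds this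
    obtain ⟨τ, hτ, hτ0⟩ := (h2.and self_mem_nhdsWithin).exists
    have hτn : (0:ℝ) < |τ ^ n| :=
      abs_pos.mpr (pow_ne_zero n (by simpa using hτ0))
    rw [norm_smul, Real.norm_eq_abs, mul_comm c] at hτ
    exact le_of_mul_le_mul_left hτ hτn
  have : ‖a‖ ≤ 0 := le_of_forall_pos_le_add (by intro ε hε; simpa using key ε hε)
  simpa using norm_le_zero_iff.mp this

-- helper: second-order Taylor with Peano remainder
lemma aux_taylor2 {F : Type*} [NormedAddCommGroup F] [NormedSpace ℝ F]
    (φ φ' : ℝ → F) (c : F)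
    (hφ : ∀ t, HasDerivAt φ (φ' t) t) (hc : HasDerivAt φ' c 0) :
    (fun τ : ℝ => φ τ - φ 0 - τ • φ' 0 - ((τ ^ 2) / 2) • c) =o[nhds (0:ℝ)]
      fun τ => τ ^ 2 := by
  set ψ : ℝ → F := fun τ => φ τ - φ 0 - τ • φ' 0 - ((τ ^ 2) / 2) • c with hψdef
  set r : ℝ → F := fun t => φ' t - φ' 0 - t • c with hrdef
  have hψ : ∀ t, HasDerivAt ψ (r t) t := by
    intro t
    have h1 : HasDerivAt (fun τ : ℝ => τ • φ' 0) (φ' 0) t := by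
      simpa using (hasDerivAt_id t).smul_const (φ' 0)
    have h2 : HasDerivAt (fun τ : ℝ => ((τ ^ 2) / 2) • c) (t • c) t := by
      have := ((hasDerivAt_pow 2 t).div_const 2).smul_const c
      simpa using this
    exact (((hφ t).sub_const (φ 0)).sub h1).sub h2
  have hr : (fun t => r t) =o[nhds (0:ℝ)] fun t => t := by
    have := hasDerivAt_iff_isLittleO.mp hc
    simpa [hrdef] using this
  have hψ0 : ψ 0 = 0 := by simp [hψdef]
  rw [isLittleO_iff]
  intro C hC
  have hr' := isLittleO_iff.mp hr hC
  rw [Metric.eventually_nhds_iff] at hr' ⊢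
  obtain ⟨δ, hδ, hδr⟩ := hr'
  refine ⟨δ, hδ, ?_⟩
  intro τ hτd
  have hτabs : |τ| < δ := by simpa [Real.dist_eq] using hτd
  have key : ∀ x : ℝ, |x| ≤ |τ| → ‖r x‖ ≤ C * |τ| := by
    intro x hx
    have hxd : dist x 0 < δ := by
      rw [Real.dist_eq, sub_zero]; exact lt_of_le_of_lt hx hτabs
    have h1 := hδr hxd
    have h2 : C * ‖x‖ ≤ C * |τ| := by
      rw [Real.norm_eq_abs]
      exact mul_le_mul_of_nonneg_left hx hC.le
    exact h1.trans h2
  have goal2 : ‖ψ τ‖ ≤ C * τ ^ 2 := by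
    rcases le_or_gt 0 τ with h | h
    · have hmvt := norm_image_sub_le_of_norm_deriv_le_segment'
        (f := ψ) (f' := r) (a := 0) (b := τ) (C := C * |τ|)
        (fun x _ => (hψ x).hasDerivWithinAt)
        (fun x hx => key x (by
          rw [abs_of_nonneg hx.1, abs_of_nonneg h]; exact hx.2.le))
        τ (Set.right_mem_Icc.mpr h)
      rw [hψ0, sub_zero, sub_zero] at hmvt
      calc ‖ψ τ‖ ≤ C * |τ| * τ := hmvt
        _ = C * τ ^ 2 := by rw [abs_of_nonneg h]; ring
    · have hmvt := norm_image_sub_le_of_norm_deriv_le_segment'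
        (f := ψ) (f' := r) (a := τ) (b := 0) (C := C * |τ|)
        (fun x _ => (hψ x).hasDerivWithinAt)
        (fun x hx => key x (by
          rw [abs_of_nonpos (hx.2.le.trans le_rfl), abs_of_neg h]
          exact neg_le_neg hx.1))
        0 (Set.right_mem_Icc.mpr h.le)
      rw [hψ0, zero_sub, norm_neg, zero_sub] at hmvt
      calc ‖ψ τ‖ ≤ C * |τ| * (-τ) := by simpa using hmvt
        _ = C * τ ^ 2 := by rw [abs_of_neg h]; ring
  calc ‖ψ τ‖ ≤ C * τ ^ 2 := goal2
    _ = C * ‖τ ^ 2‖ := by rw [Real.norm_eq_abs, abs_of_nonneg (sq_nonneg τ)]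

/-- Matching expansion for the natural projector: if the macroscopic vector
field `Ψ(M,τ) = Ψ₀(M) + τΨ₁(M) + o(τ)` generates a flow matching
`m(Θ_τ(f*_M))` up to `o(τ²)` (which, after Taylor expansion of the flow, is
expressed by the hypothesis `hmatch` below), then `Ψ₀(M) = m(J(f*_M))` and
`Ψ₁(M) = ½ m((D_f J)(f*_M) Δ_{f*_M})`, where
`Δ_{f*_M} = J(f*_M) - (D_M f*_M)(m(J(f*_M)))` is the defect of invariance. -/
theorem natural_projector_matching_expansion
    (E : Type*) [NormedAddCommGroup E] [NormedSpace ℝ E] [FiniteDimensional ℝ E]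
    (J : E → E) (hJ : ContDiff ℝ (⊤ : ℕ∞) J)
    (k : ℕ) (m : E →L[ℝ] (Fin k → ℝ))
    (fstar : (Fin k → ℝ) → E) (hfstar : ContDiff ℝ (⊤ : ℕ∞) fstar)
    (hsc : ∀ M, m (fstar M) = M)
    (Θ : ℝ → E → E)
    (hΘ0 : ∀ f, Θ 0 f = f)
    (hΘ : ∀ (τ : ℝ) (f : E), HasDerivAt (fun s => Θ s f) (J (Θ τ f)) τ)
    (Ψ0 Ψ1 : (Fin k → ℝ) → (Fin k → ℝ))
    (hΨ0 : Differentiable ℝ Ψ0)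
    (hmatch : ∀ M : Fin k → ℝ,
      (fun τ : ℝ => m (Θ τ (fstar M))
          - (M + τ • Ψ0 M
              + (τ ^ 2) • (Ψ1 M + (1 / 2 : ℝ) • fderiv ℝ Ψ0 M (Ψ0 M))))
        =o[nhds (0 : ℝ)] (fun τ => τ ^ 2)) :
    ∀ M : Fin k → ℝ,
      Ψ0 M = m (J (fstar M))
      ∧ Ψ1 M = (1 / 2 : ℝ) • m (fderiv ℝ J (fstar M)
          (J (fstar M) - fderiv ℝ fstar M (m (J (fstar M))))) := by
  have hJdiff : Differentiable ℝ J := hJ.differentiable (by simp)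
  -- Taylor expansion of the microscopic flow, pushed through m
  have hcomb : ∀ M : Fin k → ℝ,
      (fun τ : ℝ => τ • (m (J (fstar M)) - Ψ0 M)
          + (τ ^ 2) • ((1 / 2 : ℝ) • m (fderiv ℝ J (fstar M) (J (fstar M)))
              - (Ψ1 M + (1 / 2 : ℝ) • fderiv ℝ Ψ0 M (Ψ0 M))))
        =o[nhds (0 : ℝ)] (fun τ => τ ^ 2) := by
    intro M
    set f := fstar M with hf
    set g : ℝ → E := fun s => Θ s f with hg
    have hg0 : g 0 = f := hΘ0 f
    have hgd : ∀ t, HasDerivAt g (J (g t)) t := fun t => hΘ t f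
    set c : E := fderiv ℝ J f (J f) with hcdef
    have hc : HasDerivAt (fun t => J (g t)) c 0 := by
      have h1 : HasFDerivAt J (fderiv ℝ J f) (g 0) := by
        rw [hg0]; exact (hJdiff f).hasFDerivAt
      have := h1.comp_hasDerivAt 0 (hgd 0)
      rw [hg0] at this; exact this
    have htay := aux_taylor2 g (fun t => J (g t)) c hgd hc
    have hmtay : (fun τ : ℝ => m (g τ) - m f - τ • m (J f)
        - ((τ ^ 2) / 2) • m c) =o[nhds (0:ℝ)] fun τ => τ ^ 2 := by
      have := (m.isBigO_comp _ (nhds (0:ℝ))).trans_isLittleO htay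
      simpa [hg0, map_sub, map_smul] using this
    have hsub := (hmatch M).sub hmtay
    have heq : (fun τ : ℝ => (m (Θ τ (fstar M))
          - (M + τ • Ψ0 M
              + (τ ^ 2) • (Ψ1 M + (1 / 2 : ℝ) • fderiv ℝ Ψ0 M (Ψ0 M))))
        - (m (g τ) - m f - τ • m (J f) - ((τ ^ 2) / 2) • m c))
        = (fun τ : ℝ => τ • (m (J f) - Ψ0 M)
          + (τ ^ 2) • ((1 / 2 : ℝ) • m c
              - (Ψ1 M + (1 / 2 : ℝ) • fderiv ℝ Ψ0 M (Ψ0 M)))) := by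
      funext τ
      have hmf : m f = M := hsc M
      simp only [hg, hf, hmf, hsc M, smul_sub, smul_add]
      have h2 : ((τ ^ 2) / 2) • m c = (τ ^ 2) • ((1/2 : ℝ) • m c) := by
        rw [smul_smul]; ring_nf
      rw [h2]
      abel
    rw [heq] at hsub
    exact hsub
  -- first coefficient
  have hΨ0eq : ∀ M, Ψ0 M = m (J (fstar M)) := by
    intro M
    have hc' := hcomb M
    set a := m (J (fstar M)) - Ψ0 M with ha
    set b := (1 / 2 : ℝ) • m (fderiv ℝ J (fstar M) (J (fstar M)))
        - (Ψ1 M + (1 / 2 : ℝ) • fderiv ℝ Ψ0 M (Ψ0 M)) with hb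
    have hpow : (fun τ : ℝ => τ ^ 2) =o[nhds (0:ℝ)] fun τ => τ ^ 1 :=
      isLittleO_pow_pow one_lt_two
    have hbO : (fun τ : ℝ => (τ ^ 2) • b) =O[nhds (0:ℝ)] fun τ => τ ^ 2 := by
      refine isBigO_iff.mpr ⟨‖b‖, Eventually.of_forall fun τ => ?_⟩
      rw [norm_smul, mul_comm]
    have hthis := (hc'.trans_isBigO hpow.isBigO).sub (hbO.trans_isLittleO hpow)
    have heq2 : (fun τ : ℝ => (τ • a + (τ ^ 2) • b) - (τ ^ 2) • b)
        = fun τ : ℝ => τ ^ 1 • a := by funext τ; simp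
    have h1 : (fun τ : ℝ => τ ^ 1 • a) =o[nhds (0:ℝ)] fun τ => τ ^ 1 := by
      rw [← heq2]; exact hthis
    have := aux_coeff_zero one_ne_zero h1
    rw [ha, sub_eq_zero] at this
    exact this.symm
  -- derivative of Ψ0
  have hΨ0fun : Ψ0 = fun M => m (J (fstar M)) := funext hΨ0eq
  intro M
  refine ⟨hΨ0eq M, ?_⟩
  have hfd : HasFDerivAt Ψ0
      (m.comp ((fderiv ℝ J (fstar M)).comp (fderiv ℝ fstar M))) M := by
    rw [hΨ0fun]
    exact m.hasFDerivAt.comp M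
      (((hJdiff (fstar M)).hasFDerivAt).comp M
        ((hfstar.differentiable (by simp) M).hasFDerivAt))
  have hDΨ0 : fderiv ℝ Ψ0 M (Ψ0 M)
      = m (fderiv ℝ J (fstar M) (fderiv ℝ fstar M (m (J (fstar M))))) := by
    rw [hfd.fderiv, hΨ0eq M]
    rfl
  -- second coefficient
  have hbO2 : (fun τ : ℝ => τ • (m (J (fstar M)) - Ψ0 M)
      + (τ ^ 2) • ((1 / 2 : ℝ) • m (fderiv ℝ J (fstar M) (J (fstar M)))
          - (Ψ1 M + (1 / 2 : ℝ) • fderiv ℝ Ψ0 M (Ψ0 M))))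
      = fun τ : ℝ => (τ ^ 2) • ((1 / 2 : ℝ) • m (fderiv ℝ J (fstar M) (J (fstar M)))
          - (Ψ1 M + (1 / 2 : ℝ) • fderiv ℝ Ψ0 M (Ψ0 M))) := by
    funext τ
    rw [hΨ0eq M]
    simp
  have h2 := aux_coeff_zero (two_ne_zero) (by rw [← hbO2]; exact hcomb M)
  rw [sub_eq_zero] at h2
  have : Ψ1 M = (1 / 2 : ℝ) • m (fderiv ℝ J (fstar M) (J (fstar M)))
      - (1 / 2 : ℝ) • fderiv ℝ Ψ0 M (Ψ0 M) := by
    rw [eq_sub_iff_add_eq]; exact h2.symm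
  rw [this, hDΨ0, map_sub, map_sub, smul_sub]
end

section
/- Properties of the dynamical preorder: let $X$ be a compact metric space and $\Theta: [0,\infty) \times X \to X$ a continuous semiflow. Define $x_1 \succsim x_2$ iff for every $\varepsilon > 0$ there exists an $(\varepsilon, x_1)$-motion $\Theta^\varepsilon$ with $\Theta^\varepsilon(0) = x_1$ and $\Theta^\varepsilon(t_0) = x_2$ for some $t_0 \geq 0$. Then $\succsim$ is reflexive and transitive (a preorder), and it is $\Theta$-invariant: $x_1 \succsim x_2$ implies $\Theta(t, x_1) \succsim \Theta(t, x_2)$ for all $t \geq 0$. -/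
/-- An `(ε,x)`-motion (for a fixed fragment length `τ`): a curve `g` such that
on every interval of length `τ` it deviates from the genuine motion started at
the beginning of the interval by less than `ε`. -/
def IsEpsMotion {X : Type*} [MetricSpace X] (Θ : ℝ → X → X) (τ ε : ℝ)
    (g : ℝ → X) : Prop :=
  ∀ t₀ : ℝ, 0 ≤ t₀ → ∀ t : ℝ, 0 ≤ t → t ≤ τ →
    dist (g (t₀ + t)) (Θ t (g t₀)) < ε

/-- The dynamical preorder: `x₁ ≿ x₂` iff for every `ε > 0` some
`(ε,x₁)`-motion starting at `x₁` reaches `x₂` at some time `t₀ ≥ 0`. -/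
def DynPreorder {X : Type*} [MetricSpace X] (Θ : ℝ → X → X) (τ : ℝ)
    (x₁ x₂ : X) : Prop :=
  ∀ ε : ℝ, 0 < ε → ∃ g : ℝ → X,
    g 0 = x₁ ∧ IsEpsMotion Θ τ ε g ∧ ∃ t₀ : ℝ, 0 ≤ t₀ ∧ g t₀ = x₂

/-- Uniform continuity of the flow maps, uniformly over times in `[0,τ]`. -/
lemma unif_flow {X : Type*} [MetricSpace X] [CompactSpace X]
    (Θ : ℝ → X → X)
    (hcont : Continuous fun p : ℝ × X => Θ p.1 p.2) (τ : ℝ)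
    {ε : ℝ} (hε : 0 < ε) :
    ∃ δ > 0, ∀ s : ℝ, 0 ≤ s → s ≤ τ → ∀ a b : X, dist a b < δ →
      dist (Θ s a) (Θ s b) < ε := by
  set K := Set.Icc (0:ℝ) τ
  haveI : CompactSpace K := isCompact_iff_compactSpace.mp isCompact_Icc
  have hf : Continuous fun p : K × X => Θ p.1.1 p.2 :=
    hcont.comp ((continuous_subtype_val.comp continuous_fst).prodMk continuous_snd)
  have huf : UniformContinuous fun p : K × X => Θ p.1.1 p.2 :=
    CompactSpace.uniformContinuous_of_continuous hf
  obtain ⟨δ, hδ, h⟩ := Metric.uniformContinuous_iff.1 huf ε hε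
  refine ⟨δ, hδ, fun s hs hsτ a b hab => ?_⟩
  have hd : dist ((⟨⟨s, hs, hsτ⟩, a⟩ : K × X)) (⟨⟨s, hs, hsτ⟩, b⟩ : K × X) < δ := by
    simpa [Prod.dist_eq, Subtype.dist_eq] using hab
  exact h hd

/-- For a continuous semiflow `Θ` on a compact metric space, the relation
`≿` defined through `ε`-motions is reflexive, transitive (a preorder), and
`Θ`-invariant: `x₁ ≿ x₂` implies `Θ_t x₁ ≿ Θ_t x₂` for all `t ≥ 0`. -/
theorem dynPreorder_isPreorder_and_invariant
    {X : Type*} [MetricSpace X] [CompactSpace X]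
    (Θ : ℝ → X → X)
    (hcont : Continuous fun p : ℝ × X => Θ p.1 p.2)
    (hΘ0 : ∀ x, Θ 0 x = x)
    (hsemi : ∀ s t : ℝ, 0 ≤ s → 0 ≤ t → ∀ x, Θ (s + t) x = Θ s (Θ t x))
    (τ : ℝ) (hτ : 0 < τ) :
    (∀ x, DynPreorder Θ τ x x)
    ∧ (∀ x₁ x₂ x₃, DynPreorder Θ τ x₁ x₂ → DynPreorder Θ τ x₂ x₃ →
        DynPreorder Θ τ x₁ x₃)
    ∧ (∀ x₁ x₂, DynPreorder Θ τ x₁ x₂ →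
        ∀ t : ℝ, 0 ≤ t → DynPreorder Θ τ (Θ t x₁) (Θ t x₂)) := by
  refine ⟨?_, ?_, ?_⟩
  · -- reflexivity
    intro x ε hε
    refine ⟨fun s => Θ s x, hΘ0 x, ?_, 0, le_refl 0, hΘ0 x⟩
    intro t₀ ht₀ t ht htτ
    show dist (Θ (t₀ + t) x) (Θ t (Θ t₀ x)) < ε
    rw [add_comm, hsemi t t₀ ht ht₀]
    simpa using hε
  · -- transitivity
    intro x₁ x₂ x₃ h12 h23 ε hε
    obtain ⟨δ, hδ, hδprop⟩ := unif_flow Θ hcont τ (half_pos hε)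
    set ε' := min δ (ε / 2) with hε'def
    have hε' : 0 < ε' := lt_min hδ (half_pos hε)
    obtain ⟨g₁, hg₁0, hg₁m, t₁, ht₁, hg₁t₁⟩ := h12 ε' hε'
    obtain ⟨g₂, hg₂0, hg₂m, t₂, ht₂, hg₂t₂⟩ := h23 ε' hε'
    refine ⟨fun s => if s < t₁ then g₁ s else g₂ (s - t₁), ?_, ?_, t₁ + t₂, by linarith, ?_⟩
    · -- starts at x₁
      by_cases h : (0:ℝ) < t₁
      · simp [h, hg₁0]
      · have ht₁0 : t₁ = 0 := le_antisymm (not_lt.1 h) ht₁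
        simp [ht₁0, hg₂0, ← hg₁t₁, ht₁0, hg₁0]
    · -- is an ε-motion
      intro t₀ ht₀ t ht htτ
      have hε'ε : ε' ≤ ε := le_trans (min_le_right _ _) (by linarith)
      by_cases hcase1 : t₀ + t < t₁
      · have ht₀lt : t₀ < t₁ := by linarith
        simp only [if_pos hcase1, if_pos ht₀lt]
        exact lt_of_lt_of_le (hg₁m t₀ ht₀ t ht htτ) hε'ε
      · push_neg at hcase1
        by_cases hcase2 : t₀ < t₁
        · -- straddling case
          simp only [if_neg (not_lt.2 hcase1), if_pos hcase2]
          set s := t₀ + t - t₁ with hsdef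
          have hs0 : 0 ≤ s := by linarith
          have hst : s ≤ t := by linarith
          have hsτ : s ≤ τ := le_trans hst htτ
          have h1 : dist (g₂ s) (Θ s x₂) < ε' := by
            have := hg₂m 0 le_rfl s hs0 hsτ
            simpa [hg₂0] using this
          have h2 : dist x₂ (Θ (t₁ - t₀) (g₁ t₀)) < ε' := by
            have := hg₁m t₀ ht₀ (t₁ - t₀) (by linarith) (by linarith)
            rw [add_sub_cancel] at this
            rwa [hg₁t₁] at this
          have h3 : dist (Θ s x₂) (Θ s (Θ (t₁ - t₀) (g₁ t₀))) < ε / 2 :=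
            hδprop s hs0 hsτ _ _ (lt_of_lt_of_le h2 (min_le_left _ _))
          have h4 : Θ s (Θ (t₁ - t₀) (g₁ t₀)) = Θ t (g₁ t₀) := by
            rw [← hsemi s (t₁ - t₀) hs0 (by linarith)]
            congr 1
            linarith
          calc dist (g₂ s) (Θ t (g₁ t₀))
              ≤ dist (g₂ s) (Θ s x₂) + dist (Θ s x₂) (Θ t (g₁ t₀)) := dist_triangle _ _ _
            _ < ε' + ε / 2 := by rw [← h4]; exact add_lt_add h1 h3
            _ ≤ ε / 2 + ε / 2 := by
                have := min_le_right δ (ε / 2); linarith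
            _ = ε := by ring
        · -- both on second piece
          push_neg at hcase2
          have hx : ¬ t₀ + t < t₁ := not_lt.2 hcase1
          simp only [if_neg hx, if_neg (not_lt.2 hcase2)]
          have := hg₂m (t₀ - t₁) (by linarith) t ht htτ
          have heq : t₀ - t₁ + t = t₀ + t - t₁ := by ring
          rw [heq] at this
          exact lt_of_lt_of_le this (le_trans (min_le_right _ _) (by linarith))
    · -- reaches x₃
      have : ¬ t₁ + t₂ < t₁ := by linarith
      simp only [if_neg this]
      rw [show t₁ + t₂ - t₁ = t₂ by ring, hg₂t₂]
  · -- invariance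
    intro x₁ x₂ h12 t ht ε hε
    have hΘt : Continuous (Θ t) := hcont.comp (Continuous.prodMk_right t)
    have huc : UniformContinuous (Θ t) := CompactSpace.uniformContinuous_of_continuous hΘt
    rw [Metric.uniformContinuous_iff] at huc
    obtain ⟨δ, hδ, hδprop⟩ := huc ε hε
    obtain ⟨g, hg0, hgm, t₀, ht₀, hgt₀⟩ := h12 δ hδ
    refine ⟨fun s => Θ t (g s), by simp [hg0], ?_, t₀, ht₀, by simp [hgt₀]⟩
    intro s₀ hs₀ s hs hsτ
    have hkey : Θ s (Θ t (g s₀)) = Θ t (Θ s (g s₀)) := by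
      rw [← hsemi s t hs ht, ← hsemi t s ht hs, add_comm]
    show dist (Θ t (g (s₀ + s))) (Θ s (Θ t (g s₀))) < ε
    rw [hkey]
    exact hδprop (hgm s₀ hs₀ s hs hsτ)
end
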